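/- arXiv:1903.01727 — 4 statements merged into one kernel-verified Lean document; each statement's English description precedes it below -/
import Mathlib

section
/- Let M := {η ∈ C | Dη ∈ B(N, D̄)} where B(N, D̄) are coboundaries of the null subcomplex, and Z_q := {π_q(η) | η ∈ M, π_q(Dη) = 0}. Then π_q(Z(C,D)) = Z_q for every q: every pre-cocycle (projection of a cocycle) lies in Z_q, and conversely every element of Z_q is the π_q-projection of a genuine cocycle of (C, D). -/
/-!
If `Dη = Dν` with `ν` null, then `Dν = D_{1,0} ν`. Since `D_{1,0}` keeps the row and raises the
total degree by one, while `Dη` lives in total degree `k + 1` and (as `π_q(Dη) = 0`) in rows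
`< q`, only the part `ν'` of `ν` of total degree `k` in rows `< q` contributes. The null
subcomplex is bigraded, so `ν'` is again null and `Dν' = Dη`; hence `η - ν'` is a cocycle
with `π_q(η - ν') = π_q η`.
-/

open DirectSum

variable {R M : Type} [CommRing R] [AddCommGroup M] [Module R M]

/-- Projection `π_q` of a bigraded module onto the part of second degree `≥ q`,
along the bigrading. -/
noncomputable def bproj (𝒞 : ℤ × ℤ → Submodule R M) [DirectSum.Decomposition 𝒞] (q : ℤ) :
    M →ₗ[R] M :=
  (DirectSum.coeLinearMap 𝒞).comp <|
    (DFinsupp.filterLinearMap R (fun pq : ℤ × ℤ => 𝒞 pq) (fun pq => q ≤ pq.2)).comp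
      (DirectSum.decomposeLinearEquiv 𝒞).toLinearMap

/-- The bihomogeneous component of bidegree `(p, q)` of an element. -/
noncomputable def bcomp (𝒞 : ℤ × ℤ → Submodule R M) [DirectSum.Decomposition 𝒞] (p q : ℤ)
    (x : M) : M :=
  (DirectSum.decompose 𝒞 x (p, q) : M)

/-- The total-degree-`k` part `C^k = ⊕_{p+q=k} C^{p,q}`. -/
def bdeg (𝒞 : ℤ × ℤ → Submodule R M) (k : ℤ) : Submodule R M :=
  ⨆ p : ℤ, 𝒞 (p, k - p)

/-- The part of second degree `q`, `⊕_p C^{p,q}`. -/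
def brow (𝒞 : ℤ × ℤ → Submodule R M) (q : ℤ) : Submodule R M :=
  ⨆ p : ℤ, 𝒞 (p, q)

/-- The decreasing column filtration `F^p C = ⊕_{i ≥ p, j} C^{i,j}`. -/
def bfil (𝒞 : ℤ × ℤ → Submodule R M) (p : ℤ) : Submodule R M :=
  ⨆ (i : ℤ) (_ : p ≤ i) (j : ℤ), 𝒞 (i, j)

section GradedProj

variable {ι : Type*} {𝒜 : ι → Submodule R M}

theorem map_biSup_le {f : M →ₗ[R] M} {σ : ι → ι} (hf : ∀ i, (𝒜 i).map f ≤ 𝒜 (σ i))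
    {S T : Set ι} (hST : Set.MapsTo σ S T) :
    (⨆ i ∈ S, 𝒜 i).map f ≤ ⨆ i ∈ T, 𝒜 i := by
  simp only [Submodule.map_iSup]
  exact iSup₂_le fun i hi => (hf i).trans (le_biSup 𝒜 (hST hi))

variable [DecidableEq ι] [Decomposition 𝒜]

variable (𝒜) in
open Classical in
noncomputable def gradedProj (S : Set ι) : M →ₗ[R] M :=
  DirectSum.coeLinearMap 𝒜 ∘ₗ DFinsupp.filterLinearMap R (fun i => 𝒜 i) (· ∈ S) ∘ₗ
    (DirectSum.decomposeLinearEquiv 𝒜).toLinearMap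

theorem gradedProj_of_mem_of_mem {S : Set ι} {i : ι} {x : M} (hx : x ∈ 𝒜 i) (hi : i ∈ S) :
    gradedProj 𝒜 S x = x := by
  classical
  simp only [gradedProj, LinearMap.comp_apply, LinearEquiv.coe_coe, decomposeLinearEquiv_apply,
    decompose_of_mem 𝒜 hx]
  rw [show of (fun i => 𝒜 i) i ⟨x, hx⟩ = DFinsupp.single i ⟨x, hx⟩ from rfl,
    DFinsupp.filterLinearMap_apply, DFinsupp.filter_single_pos _ _ hi]
  exact coeLinearMap_of 𝒜 i ⟨x, hx⟩

theorem gradedProj_of_mem_of_notMem {S : Set ι} {i : ι} {x : M} (hx : x ∈ 𝒜 i) (hi : i ∉ S) :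
    gradedProj 𝒜 S x = 0 := by
  classical
  simp only [gradedProj, LinearMap.comp_apply, LinearEquiv.coe_coe, decomposeLinearEquiv_apply,
    decompose_of_mem 𝒜 hx]
  rw [show of (fun i => 𝒜 i) i ⟨x, hx⟩ = DFinsupp.single i ⟨x, hx⟩ from rfl,
    DFinsupp.filterLinearMap_apply, DFinsupp.filter_single_neg _ _ hi, map_zero]

theorem gradedProj_empty : gradedProj 𝒜 (∅ : Set ι) = 0 :=
  decompose_lhom_ext 𝒜 fun _ => LinearMap.ext fun x =>
    gradedProj_of_mem_of_notMem x.2 (Set.notMem_empty _)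

theorem gradedProj_comp_gradedProj (S T : Set ι) :
    gradedProj 𝒜 S ∘ₗ gradedProj 𝒜 T = gradedProj 𝒜 (S ∩ T) := by
  refine decompose_lhom_ext 𝒜 fun i => LinearMap.ext fun x => ?_
  have hx := x.2
  by_cases hT : i ∈ T
  · by_cases hS : i ∈ S
    · simp [gradedProj_of_mem_of_mem hx hT, gradedProj_of_mem_of_mem hx hS,
        gradedProj_of_mem_of_mem (S := S ∩ T) hx ⟨hS, hT⟩]
    · simp [gradedProj_of_mem_of_mem hx hT, gradedProj_of_mem_of_notMem hx hS,
        gradedProj_of_mem_of_notMem (S := S ∩ T) hx fun h => hS h.1]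
  · simp [gradedProj_of_mem_of_notMem hx hT,
      gradedProj_of_mem_of_notMem (S := S ∩ T) hx fun h => hT h.2]

theorem gradedProj_add_gradedProj_compl (S : Set ι) (x : M) :
    gradedProj 𝒜 S x + gradedProj 𝒜 Sᶜ x = x := by
  suffices gradedProj 𝒜 S + gradedProj 𝒜 Sᶜ = LinearMap.id from LinearMap.congr_fun this x
  refine decompose_lhom_ext 𝒜 fun i => LinearMap.ext fun x => ?_
  by_cases hS : i ∈ S
  · simp [gradedProj_of_mem_of_mem x.2 hS,
      gradedProj_of_mem_of_notMem (S := Sᶜ) x.2 (Set.notMem_compl_iff.mpr hS)]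
  · simp [gradedProj_of_mem_of_notMem x.2 hS, gradedProj_of_mem_of_mem (S := Sᶜ) x.2 hS]

theorem comp_gradedProj {f : M →ₗ[R] M} {σ : ι → ι} (hf : ∀ i, (𝒜 i).map f ≤ 𝒜 (σ i))
    {S T : Set ι} (hST : ∀ i, σ i ∈ T ↔ i ∈ S) :
    f ∘ₗ gradedProj 𝒜 S = gradedProj 𝒜 T ∘ₗ f := by
  refine decompose_lhom_ext 𝒜 fun i => LinearMap.ext fun ⟨x, hx⟩ => ?_
  have hfx : f x ∈ 𝒜 (σ i) := hf i ⟨x, hx, rfl⟩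
  by_cases hS : i ∈ S
  · simp [gradedProj_of_mem_of_mem hx hS, gradedProj_of_mem_of_mem hfx ((hST i).2 hS)]
  · simp [gradedProj_of_mem_of_notMem hx hS, gradedProj_of_mem_of_notMem hfx (mt (hST i).1 hS)]

theorem map_gradedProj_eq_zero {f : M →ₗ[R] M} {σ : ι → ι} (hf : ∀ i, (𝒜 i).map f ≤ 𝒜 (σ i))
    (hσ : σ.Injective) (S : Set ι) {x : M} (hx : f x = 0) : f (gradedProj 𝒜 S x) = 0 := by
  rw [← LinearMap.comp_apply, comp_gradedProj hf (T := σ '' S) fun i => hσ.mem_set_image,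
    LinearMap.comp_apply, hx, map_zero]

theorem gradedProj_eq_self_iff {S : Set ι} {x : M} :
    gradedProj 𝒜 S x = x ↔ x ∈ ⨆ i ∈ S, 𝒜 i := by
  refine ⟨fun h => h ▸ ?_, fun hx => ?_⟩
  · clear h
    induction x using DirectSum.Decomposition.inductionOn 𝒜 with
    | zero => simp
    | @homogeneous i x =>
      by_cases hS : i ∈ S
      · rw [gradedProj_of_mem_of_mem x.2 hS]; exact le_biSup 𝒜 hS x.2
      · rw [gradedProj_of_mem_of_notMem x.2 hS]; exact zero_mem _
    | add x y hx hy => rw [map_add]; exact add_mem hx hy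
  · suffices ⨆ i ∈ S, 𝒜 i ≤ LinearMap.ker (gradedProj 𝒜 S - LinearMap.id) from
      sub_eq_zero.mp (this hx)
    exact iSup₂_le fun i hi x hx => by simp [gradedProj_of_mem_of_mem hx hi]

end GradedProj

section Bigraded

variable {𝒞 : ℤ × ℤ → Submodule R M}

theorem bdeg_eq_biSup (k : ℤ) : bdeg 𝒞 k = ⨆ i ∈ {i : ℤ × ℤ | i.1 + i.2 = k}, 𝒞 i := by
  refine le_antisymm (iSup_le fun p => le_biSup 𝒞 (by simp)) (iSup₂_le fun i hi => ?_)
  obtain ⟨p, r⟩ := i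
  obtain rfl : r = k - p := by have : p + r = k := hi; omega
  exact le_iSup (fun p => 𝒞 (p, k - p)) p

theorem map_bdeg_le {f : M →ₗ[R] M} {σ : ℤ × ℤ → ℤ × ℤ} (hf : ∀ i, (𝒞 i).map f ≤ 𝒞 (σ i))
    (hσ : ∀ i, (σ i).1 + (σ i).2 = i.1 + i.2 + 1) (k : ℤ) :
    (bdeg 𝒞 k).map f ≤ bdeg 𝒞 (k + 1) := by
  rw [bdeg_eq_biSup, bdeg_eq_biSup]
  exact map_biSup_le hf fun i (hi : i.1 + i.2 = k) => show _ = _ by rw [hσ, hi]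

theorem map_bdeg_le_bdeg_add_one {D21 D10 D01 : M →ₗ[R] M}
    (h21 : ∀ p q : ℤ, (𝒞 (p, q)).map D21 ≤ 𝒞 (p + 2, q - 1))
    (h10 : ∀ p q : ℤ, (𝒞 (p, q)).map D10 ≤ 𝒞 (p + 1, q))
    (h01 : ∀ p q : ℤ, (𝒞 (p, q)).map D01 ≤ 𝒞 (p, q + 1)) (k : ℤ) :
    (bdeg 𝒞 k).map (D21 + D10 + D01) ≤ bdeg 𝒞 (k + 1) := by
  rintro _ ⟨x, hx, rfl⟩
  refine add_mem (add_mem ?_ ?_) ?_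
  · exact map_bdeg_le (fun i => h21 i.1 i.2) (fun i => by ring) k (Submodule.mem_map_of_mem hx)
  · exact map_bdeg_le (fun i => h10 i.1 i.2) (fun i => by ring) k (Submodule.mem_map_of_mem hx)
  · exact map_bdeg_le (fun i => h01 i.1 i.2) (fun i => by ring) k (Submodule.mem_map_of_mem hx)

variable [Decomposition 𝒞]

theorem bproj_eq_gradedProj (q : ℤ) : bproj 𝒞 q = gradedProj 𝒞 {i | q ≤ i.2} := by
  unfold bproj gradedProj
  congr

theorem mem_bdeg_iff {k : ℤ} {x : M} :
    x ∈ bdeg 𝒞 k ↔ gradedProj 𝒞 {i | i.1 + i.2 = k} x = x := by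
  rw [bdeg_eq_biSup, gradedProj_eq_self_iff]

theorem gradedProj_eq_self_of_mem_bdeg {k q : ℤ} {y : M} (hy : y ∈ bdeg 𝒞 k)
    (hyq : bproj 𝒞 q y = 0) : gradedProj 𝒞 {i : ℤ × ℤ | i.1 + i.2 = k ∧ i.2 < q} y = y := by
  have hlow : gradedProj 𝒞 {i : ℤ × ℤ | q ≤ i.2}ᶜ y = y := by
    simpa [← bproj_eq_gradedProj, hyq] using
      gradedProj_add_gradedProj_compl (𝒜 := 𝒞) {i | q ≤ i.2} y
  have hS : {i : ℤ × ℤ | i.1 + i.2 = k ∧ i.2 < q} =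
      {i : ℤ × ℤ | i.1 + i.2 = k} ∩ {i : ℤ × ℤ | q ≤ i.2}ᶜ := by
    ext; simp
  rw [hS, ← gradedProj_comp_gradedProj, LinearMap.comp_apply, hlow, ← mem_bdeg_iff]
  exact hy

theorem exists_mem_bdeg_bproj_eq_zero_of_null {D21 D10 D01 : M →ₗ[R] M}
    (h21 : ∀ p q : ℤ, (𝒞 (p, q)).map D21 ≤ 𝒞 (p + 2, q - 1))
    (h10 : ∀ p q : ℤ, (𝒞 (p, q)).map D10 ≤ 𝒞 (p + 1, q))
    (h01 : ∀ p q : ℤ, (𝒞 (p, q)).map D01 ≤ 𝒞 (p, q + 1)) {k q : ℤ} {η ν : M}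
    (hη : η ∈ bdeg 𝒞 k) (hν : ν ∈ LinearMap.ker D01 ⊓ LinearMap.ker D21)
    (hDν : (D21 + D10 + D01) ν = (D21 + D10 + D01) η)
    (hπ : bproj 𝒞 q ((D21 + D10 + D01) η) = 0) :
    ∃ ν' ∈ bdeg 𝒞 k, bproj 𝒞 q ν' = 0 ∧ (D21 + D10 + D01) ν' = (D21 + D10 + D01) η := by
  set S := {i : ℤ × ℤ | i.1 + i.2 = k ∧ i.2 < q}
  have hnull : ∀ x ∈ LinearMap.ker D01 ⊓ LinearMap.ker D21, (D21 + D10 + D01) x = D10 x := by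
    rintro x ⟨h0, h2⟩
    simp [LinearMap.mem_ker.mp h0, LinearMap.mem_ker.mp h2]
  have hνS : gradedProj 𝒞 S ν ∈ LinearMap.ker D01 ⊓ LinearMap.ker D21 :=
    ⟨map_gradedProj_eq_zero (fun i => h01 i.1 i.2) (fun _ _ h => by simpa [Prod.ext_iff] using h)
        S hν.1,
      map_gradedProj_eq_zero (fun i => h21 i.1 i.2) (fun _ _ h => by simpa [Prod.ext_iff] using h)
        S hν.2⟩
  refine ⟨gradedProj 𝒞 S ν, ?_, ?_, ?_⟩
  · rw [mem_bdeg_iff, ← LinearMap.comp_apply, gradedProj_comp_gradedProj,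
      Set.inter_eq_right.mpr fun i hi => hi.1]
  · rw [bproj_eq_gradedProj, ← LinearMap.comp_apply, gradedProj_comp_gradedProj,
      Set.disjoint_iff_inter_eq_empty.mp (Set.disjoint_left.mpr fun i hi hi' => ?_),
      gradedProj_empty, LinearMap.zero_apply]
    exact hi'.2.not_ge hi
  · calc (D21 + D10 + D01) (gradedProj 𝒞 S ν)
        = D10 (gradedProj 𝒞 S ν) := hnull _ hνS
      _ = gradedProj 𝒞 {i : ℤ × ℤ | i.1 + i.2 = k + 1 ∧ i.2 < q} (D10 ν) := by
        rw [← LinearMap.comp_apply, comp_gradedProj (fun i => h10 i.1 i.2)]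
        · rfl
        · exact fun i => and_congr_left' (by omega)
      _ = (D21 + D10 + D01) η := by
        rw [← hnull ν hν, hDν]
        exact gradedProj_eq_self_of_mem_bdeg
          (map_bdeg_le_bdeg_add_one h21 h10 h01 k (Submodule.mem_map_of_mem hη)) hπ

end Bigraded

theorem statement9_general
    (𝒞 : ℤ × ℤ → Submodule R M) [DirectSum.Decomposition 𝒞]
    (D21 D10 D01 : M →ₗ[R] M)
    (h21 : ∀ p q : ℤ, (𝒞 (p, q)).map D21 ≤ 𝒞 (p + 2, q - 1))
    (h10 : ∀ p q : ℤ, (𝒞 (p, q)).map D10 ≤ 𝒞 (p + 1, q))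
    (h01 : ∀ p q : ℤ, (𝒞 (p, q)).map D01 ≤ 𝒞 (p, q + 1))
    (D : M →ₗ[R] M) (hDdef : D = D21 + D10 + D01)
    (k q : ℤ)
    -- `N` : the null subcomplex; its coboundaries `B(N, D̄)` are `D(N)`
    (N : Submodule R M) (hN : N = LinearMap.ker D01 ⊓ LinearMap.ker D21)
    -- `𝓜` : the elements of degree k whose coboundary is a coboundary of `N`
    (𝓜 : Submodule R M)
    (h𝓜 : 𝓜 = bdeg 𝒞 k ⊓ Submodule.comap D (Submodule.map D N)) :
    -- `π_q(Z^k(C,D)) = Z^k_q`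
    (Submodule.map (bproj 𝒞 q) (bdeg 𝒞 k ⊓ LinearMap.ker D) : Set M) =
      {x : M | ∃ η, η ∈ 𝓜 ∧ bproj 𝒞 q η = x ∧ bproj 𝒞 q (D η) = 0} := by
  subst hDdef hN h𝓜
  ext x
  constructor
  · rintro ⟨ζ, ⟨hζ, hDζ : (D21 + D10 + D01) ζ = 0⟩, rfl⟩
    exact ⟨ζ, ⟨hζ, 0, zero_mem _, by rw [map_zero, hDζ]⟩, rfl, by rw [hDζ, map_zero]⟩
  · rintro ⟨η, ⟨hη, ν, hν, hDν⟩, rfl, hπ⟩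
    obtain ⟨ν', hν', hπν', hDν'⟩ :=
      exists_mem_bdeg_bproj_eq_zero_of_null h21 h10 h01 hη hν hDν hπ
    exact ⟨η - ν', ⟨sub_mem hη hν', LinearMap.mem_ker.mpr (by rw [map_sub, hDν', sub_self])⟩,
      by rw [map_sub, hπν', sub_zero]⟩

theorem statement9
    (𝒞 : ℤ × ℤ → Submodule R M) [DirectSum.Decomposition 𝒞]
    (hfq : ∀ p q : ℤ, p < 0 ∨ q < 0 → 𝒞 (p, q) = ⊥)
    (D21 D10 D01 : M →ₗ[R] M)
    (h21 : ∀ p q : ℤ, (𝒞 (p, q)).map D21 ≤ 𝒞 (p + 2, q - 1))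
    (h10 : ∀ p q : ℤ, (𝒞 (p, q)).map D10 ≤ 𝒞 (p + 1, q))
    (h01 : ∀ p q : ℤ, (𝒞 (p, q)).map D01 ≤ 𝒞 (p, q + 1))
    (D : M →ₗ[R] M) (hDdef : D = D21 + D10 + D01) (hD : D ∘ₗ D = 0)
    (k q : ℤ)
    -- `N` : the null subcomplex; its coboundaries `B(N, D̄)` are `D(N)`
    (N : Submodule R M) (hN : N = LinearMap.ker D01 ⊓ LinearMap.ker D21)
    -- `𝓜` : the elements of degree k whose coboundary is a coboundary of `N`
    (𝓜 : Submodule R M)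
    (h𝓜 : 𝓜 = bdeg 𝒞 k ⊓ Submodule.comap D (Submodule.map D N)) :
    -- `π_q(Z^k(C,D)) = Z^k_q`
    (Submodule.map (bproj 𝒞 q) (bdeg 𝒞 k ⊓ LinearMap.ker D) : Set M) =
      {x : M | ∃ η, η ∈ 𝓜 ∧ bproj 𝒞 q η = x ∧ bproj 𝒞 q (D η) = 0} :=
  statement9_general 𝒞 D21 D10 D01 h21 h10 h01 D hDdef k q N hN 𝓜 h𝓜
end

section
/- If η ∈ C^k satisfies π_1(Dη) = 0 (all bigraded components of Dη of second degree ≥ 1 vanish), then the remaining component pr_{k+1,0}(Dη) = D_{2,-1}η_{k-1,1} + D_{1,0}η_{k,0} is a cocycle of the null subcomplex N_0, i.e., it is annihilated by both D_{0,1} and D_{1,0}. -/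
open DirectSum

variable {R M : Type} [CommRing R] [AddCommGroup M] [Module R M]

/-
Everything is read off from bihomogeneous components of `D (D η) = 0`. Since `D` has pieces of
bidegrees `(2,-1)`, `(1,0)`, `(0,1)`, the `(p,q)`-component of `D x` only involves the components
of `x` in bidegrees `(p-2,q+1)`, `(p-1,q)`, `(p,q-1)`. For `z = D η`, which by hypothesis lives in
row `0`, the `(p,1)`-component of `D z = 0` reduces to `D₀₁ z_{p,0} = 0` and the
`(p+1,0)`-component to `D₁₀ z_{p,0} = 0`, the row `-1` being zero.
-/

section

variable (𝒞 : ℤ × ℤ → Submodule R M) [DirectSum.Decomposition 𝒞]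

lemma bcomp_add (p q : ℤ) (x y : M) :
    bcomp 𝒞 p q (x + y) = bcomp 𝒞 p q x + bcomp 𝒞 p q y := by
  simp [bcomp]

lemma bcomp_zero (p q : ℤ) : bcomp 𝒞 p q 0 = 0 := by
  simp [bcomp]

lemma bcomp_neg (p q : ℤ) (x : M) : bcomp 𝒞 p q (-x) = -bcomp 𝒞 p q x := by
  simp only [bcomp, DirectSum.decompose_neg]
  rfl

lemma bcomp_eq_zero_of_eq_bot {p q : ℤ} (h : 𝒞 (p, q) = ⊥) (x : M) : bcomp 𝒞 p q x = 0 :=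
  (Submodule.eq_bot_iff _).mp h _ (DirectSum.decompose 𝒞 x (p, q)).2

lemma bcomp_bproj (q₀ p q : ℤ) (x : M) :
    bcomp 𝒞 p q (bproj 𝒞 q₀ x) = if q₀ ≤ q then bcomp 𝒞 p q x else 0 := by
  have : DirectSum.decompose 𝒞 (bproj 𝒞 q₀ x) =
      DFinsupp.filter (fun pq : ℤ × ℤ => q₀ ≤ pq.2) (DirectSum.decompose 𝒞 x) :=
    (DirectSum.decomposeLinearEquiv 𝒞).apply_symm_apply _
  rw [bcomp, this, DFinsupp.filter_apply]
  split_ifs <;> rfl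

lemma bcomp_eq_zero_of_bproj_eq_zero {q₀ : ℤ} {x : M} (hx : bproj 𝒞 q₀ x = 0) {p q : ℤ}
    (hq : q₀ ≤ q) : bcomp 𝒞 p q x = 0 := by
  calc bcomp 𝒞 p q x = bcomp 𝒞 p q (bproj 𝒞 q₀ x) := by rw [bcomp_bproj, if_pos hq]
    _ = 0 := by simp [hx, bcomp]

lemma bcomp_map_of_bidegree {T : M →ₗ[R] M} {s t : ℤ}
    (hT : ∀ p q : ℤ, (𝒞 (p, q)).map T ≤ 𝒞 (p + s, q + t)) {p q p' q' : ℤ}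
    (hp : p' = p + s) (hq : q' = q + t) (x : M) :
    bcomp 𝒞 p' q' (T x) = T (bcomp 𝒞 p q x) := by
  subst hp hq
  induction x using DirectSum.Decomposition.inductionOn 𝒞 with
  | zero => simp [bcomp]
  | @homogeneous i m =>
    obtain ⟨a, b⟩ := i
    have hTm : T m ∈ 𝒞 (a + s, b + t) := hT a b ⟨m, m.2, rfl⟩
    by_cases h : (a, b) = (p, q)
    · obtain ⟨rfl, rfl⟩ := Prod.mk.inj h
      simp only [bcomp, DirectSum.decompose_of_mem_same 𝒞 hTm,
        DirectSum.decompose_of_mem_same 𝒞 m.2]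
    · have h' : (a + s, b + t) ≠ (p + s, q + t) := by
        simpa [Prod.ext_iff] using h
      simp only [bcomp, DirectSum.decompose_of_mem_ne 𝒞 hTm h',
        DirectSum.decompose_of_mem_ne 𝒞 m.2 h, map_zero]
  | add x y hx hy => rw [map_add, bcomp_add, bcomp_add, hx, hy, map_add]

variable {𝒞} {D21 D10 D01 : M →ₗ[R] M}

lemma bcomp_differential_apply (h21 : ∀ p q : ℤ, (𝒞 (p, q)).map D21 ≤ 𝒞 (p + 2, q - 1))
    (h10 : ∀ p q : ℤ, (𝒞 (p, q)).map D10 ≤ 𝒞 (p + 1, q))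
    (h01 : ∀ p q : ℤ, (𝒞 (p, q)).map D01 ≤ 𝒞 (p, q + 1)) (p q : ℤ) (x : M) :
    bcomp 𝒞 p q ((D21 + D10 + D01) x) =
      D21 (bcomp 𝒞 (p - 2) (q + 1) x) + D10 (bcomp 𝒞 (p - 1) q x) +
        D01 (bcomp 𝒞 p (q - 1) x) := by
  have h21' : ∀ p q : ℤ, (𝒞 (p, q)).map D21 ≤ 𝒞 (p + 2, q + -1) := by
    simpa only [← sub_eq_add_neg] using h21
  have h10' : ∀ p q : ℤ, (𝒞 (p, q)).map D10 ≤ 𝒞 (p + 1, q + 0) := by simpa using h10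
  have h01' : ∀ p q : ℤ, (𝒞 (p, q)).map D01 ≤ 𝒞 (p + 0, q + 1) := by simpa using h01
  rw [LinearMap.add_apply, LinearMap.add_apply, bcomp_add, bcomp_add,
    bcomp_map_of_bidegree 𝒞 h21' (p := p - 2) (q := q + 1) (by ring) (by ring),
    bcomp_map_of_bidegree 𝒞 h10' (p := p - 1) (q := q) (by ring) (by ring),
    bcomp_map_of_bidegree 𝒞 h01' (p := p) (q := q - 1) (by ring) (by ring)]

lemma bcomp_row_zero_cocycle (h21 : ∀ p q : ℤ, (𝒞 (p, q)).map D21 ≤ 𝒞 (p + 2, q - 1))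
    (h10 : ∀ p q : ℤ, (𝒞 (p, q)).map D10 ≤ 𝒞 (p + 1, q))
    (h01 : ∀ p q : ℤ, (𝒞 (p, q)).map D01 ≤ 𝒞 (p, q + 1)) (hneg : ∀ p : ℤ, 𝒞 (p, -1) = ⊥)
    {z : M} (hz : (D21 + D10 + D01) z = 0) (hπ : bproj 𝒞 1 z = 0) (p : ℤ) :
    D01 (bcomp 𝒞 p 0 z) = 0 ∧ D10 (bcomp 𝒞 p 0 z) = 0 := by
  have hrow : ∀ p' q : ℤ, 1 ≤ q → bcomp 𝒞 p' q z = 0 := fun p' _ hq =>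
    bcomp_eq_zero_of_bproj_eq_zero 𝒞 hπ hq
  have h1 := bcomp_differential_apply h21 h10 h01 p 1 z
  have h0 := bcomp_differential_apply h21 h10 h01 (p + 1) 0 z
  rw [hz, bcomp_zero, hrow _ (1 + 1) (by norm_num), hrow _ 1 le_rfl, sub_self] at h1
  rw [hz, bcomp_zero, hrow _ (0 + 1) le_rfl, add_sub_cancel_right, zero_sub,
    bcomp_eq_zero_of_eq_bot 𝒞 (hneg _)] at h0
  simp only [map_zero, zero_add, add_zero] at h1 h0
  exact ⟨h1.symm, h0.symm⟩

end

theorem statement10_general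
    (𝒞 : ℤ × ℤ → Submodule R M) [DirectSum.Decomposition 𝒞]
    (hfq : ∀ p q : ℤ, p < 0 ∨ q < 0 → 𝒞 (p, q) = ⊥)
    (D21 D10 D01 : M →ₗ[R] M)
    (h21 : ∀ p q : ℤ, (𝒞 (p, q)).map D21 ≤ 𝒞 (p + 2, q - 1))
    (h10 : ∀ p q : ℤ, (𝒞 (p, q)).map D10 ≤ 𝒞 (p + 1, q))
    (h01 : ∀ p q : ℤ, (𝒞 (p, q)).map D01 ≤ 𝒞 (p, q + 1))
    (D : M →ₗ[R] M) (hDdef : D = D21 + D10 + D01) (hD : D ∘ₗ D = 0)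
    (k : ℤ) (η : M)
    (hπ : bproj 𝒞 1 (D η) = 0) :
    bcomp 𝒞 (k + 1) 0 (D η) =
      D21 (bcomp 𝒞 (k - 1) 1 η) + D10 (bcomp 𝒞 k 0 η) ∧
    D01 (D21 (bcomp 𝒞 (k - 1) 1 η) + D10 (bcomp 𝒞 k 0 η)) = 0 ∧
    D10 (D21 (bcomp 𝒞 (k - 1) 1 η) + D10 (bcomp 𝒞 k 0 η)) = 0 := by
  have hneg : ∀ p : ℤ, 𝒞 (p, -1) = ⊥ := fun p => hfq p (-1) (Or.inr (by norm_num))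
  have hcomp :
      bcomp 𝒞 (k + 1) 0 (D η) = D21 (bcomp 𝒞 (k - 1) 1 η) + D10 (bcomp 𝒞 k 0 η) := by
    rw [hDdef, bcomp_differential_apply h21 h10 h01, zero_sub,
      bcomp_eq_zero_of_eq_bot 𝒞 (hneg _), map_zero, add_zero, add_sub_cancel_right, zero_add,
      show k + 1 - 2 = k - 1 by ring]
  have hDD : (D21 + D10 + D01) (D η) = 0 := by
    rw [← hDdef]
    exact LinearMap.congr_fun hD η
  rw [← hcomp]
  exact ⟨rfl, bcomp_row_zero_cocycle h21 h10 h01 hneg hDD hπ (k + 1)⟩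

theorem statement10
    (𝒞 : ℤ × ℤ → Submodule R M) [DirectSum.Decomposition 𝒞]
    (hfq : ∀ p q : ℤ, p < 0 ∨ q < 0 → 𝒞 (p, q) = ⊥)
    (D21 D10 D01 : M →ₗ[R] M)
    (h21 : ∀ p q : ℤ, (𝒞 (p, q)).map D21 ≤ 𝒞 (p + 2, q - 1))
    (h10 : ∀ p q : ℤ, (𝒞 (p, q)).map D10 ≤ 𝒞 (p + 1, q))
    (h01 : ∀ p q : ℤ, (𝒞 (p, q)).map D01 ≤ 𝒞 (p, q + 1))
    (D : M →ₗ[R] M) (hDdef : D = D21 + D10 + D01) (hD : D ∘ₗ D = 0)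
    (k : ℤ) (η : M) (hη : η ∈ bdeg 𝒞 k)
    (hπ : bproj 𝒞 1 (D η) = 0) :
    bcomp 𝒞 (k + 1) 0 (D η) =
      D21 (bcomp 𝒞 (k - 1) 1 η) + D10 (bcomp 𝒞 k 0 η) ∧
    D01 (D21 (bcomp 𝒞 (k - 1) 1 η) + D10 (bcomp 𝒞 k 0 η)) = 0 ∧
    D10 (D21 (bcomp 𝒞 (k - 1) 1 η) + D10 (bcomp 𝒞 k 0 η)) = 0 :=
  statement10_general 𝒞 hfq D21 D10 D01 h21 h10 h01 D hDdef hD k η hπ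
end

section
/- There is a well-defined linear map ρ_k: A^k → H^{k+1}(N_0, D̄) given by ρ_k(ξ) = [D_{2,-1}ξ_{k-1,1} + D_{1,0}η_{k,0}], where η ∈ C^k is any element with π_1(η) = ξ and π_1(Dη) = 0: the cohomology class is independent of the choice of η. Moreover ker(ρ_k) equals the module Z^k_1 of pre-cocycles of second degree ≥ 1. -/
/-!
For `η` of total degree `k`, `D η` and `π₁ (D η)` differ exactly by the row-zero term
`D₂,₋₁ η_{k-1,1} + D₁,₀ η_{k,0}`, since nothing lies below row zero; so when `π₁ (D η) = 0` that
term is `D η` itself. Two lifts of the same `ξ` differ by some `μ ∈ C^{k,0}`, and then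
`D₂,₋₁ μ = 0`, `D₀,₁ μ = π₁ (D μ) = 0`, so `D μ = D₁,₀ μ` is a coboundary of `N₀`. Conversely, if
the term equals `D₁,₀ γ` for such a `γ`, then `η - γ` is a cocycle lifting `ξ`.
-/

open DirectSum

variable {R M : Type} [CommRing R] [AddCommGroup M] [Module R M]

section Bigraded

variable (𝒞 : ℤ × ℤ → Submodule R M)

lemma le_bdeg (p k : ℤ) : 𝒞 (p, k - p) ≤ bdeg 𝒞 k :=
  le_iSup (fun p => 𝒞 (p, k - p)) p

lemma eqOn_bdeg {f g : M →ₗ[R] M} {k : ℤ} (h : ∀ p, ∀ x ∈ 𝒞 (p, k - p), f x = g x)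
    {x : M} (hx : x ∈ bdeg 𝒞 k) : f x = g x :=
  (iSup_le fun p y hy => h p y hy : bdeg 𝒞 k ≤ LinearMap.eqLocus f g) hx

variable [DirectSum.Decomposition 𝒞]

noncomputable def bcompLinearMap (p q : ℤ) : M →ₗ[R] M :=
  (𝒞 (p, q)).subtype ∘ₗ DirectSum.component R (ℤ × ℤ) (fun pq => 𝒞 pq) (p, q) ∘ₗ
    (DirectSum.decomposeLinearEquiv 𝒞).toLinearMap

lemma bcompLinearMap_apply (p q : ℤ) (x : M) : bcompLinearMap 𝒞 p q x = bcomp 𝒞 p q x := rfl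

lemma bcomp_mem (p q : ℤ) (x : M) : bcomp 𝒞 p q x ∈ 𝒞 (p, q) := SetLike.coe_mem _

lemma bproj_of_mem {p q : ℤ} (q₀ : ℤ) {x : M} (hx : x ∈ 𝒞 (p, q)) :
    bproj 𝒞 q₀ x = if q₀ ≤ q then x else 0 := by
  change DirectSum.coeLinearMap 𝒞 (DFinsupp.filter _ (DirectSum.decompose 𝒞 x)) = _
  rw [DirectSum.decompose_of_mem 𝒞 hx]
  erw [DFinsupp.filter_single]
  split_ifs
  · erw [DirectSum.coeLinearMap_of]
  · simp

lemma bcomp_of_mem {p q : ℤ} (p' q' : ℤ) {x : M} (hx : x ∈ 𝒞 (p, q)) :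
    bcomp 𝒞 p' q' x = if (p, q) = (p', q') then x else 0 := by
  rw [bcomp, DirectSum.decompose_of_mem 𝒞 hx, DirectSum.coe_of_apply]
  split_ifs <;> simp

end Bigraded

section NonnegRows

variable {𝒞 : ℤ × ℤ → Submodule R M} [DirectSum.Decomposition 𝒞]

omit [DirectSum.Decomposition 𝒞] in
lemma eq_zero_of_mem_of_snd_neg (hlow : ∀ p q : ℤ, q < 0 → 𝒞 (p, q) = ⊥)
    {p q : ℤ} (hq : q < 0) {x : M} (hx : x ∈ 𝒞 (p, q)) : x = 0 := by
  rwa [hlow p q hq, Submodule.mem_bot] at hx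

lemma bproj_add_bcomp_of_mem_bdeg (hlow : ∀ p q : ℤ, q < 0 → 𝒞 (p, q) = ⊥)
    {k : ℤ} {η : M} (hη : η ∈ bdeg 𝒞 k) : bproj 𝒞 1 η + bcomp 𝒞 k 0 η = η := by
  refine eqOn_bdeg 𝒞 (f := bproj 𝒞 1 + bcompLinearMap 𝒞 k 0) (g := LinearMap.id)
    (fun p x hx => ?_) hη
  simp only [LinearMap.add_apply, LinearMap.id_apply, bcompLinearMap_apply,
    bproj_of_mem 𝒞 1 hx, bcomp_of_mem 𝒞 k 0 hx, Prod.ext_iff]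
  rcases lt_trichotomy (k - p) 0 with hneg | hzero | hpos
  · simp [eq_zero_of_mem_of_snd_neg hlow hneg hx]
  · rw [if_neg (by omega), if_pos (by omega), zero_add]
  · rw [if_pos (by omega), if_neg (by omega), add_zero]

lemma sub_mem_of_bproj_eq (hlow : ∀ p q : ℤ, q < 0 → 𝒞 (p, q) = ⊥)
    {k : ℤ} {η η' : M} (hη : η ∈ bdeg 𝒞 k) (hη' : η' ∈ bdeg 𝒞 k)
    (h : bproj 𝒞 1 η = bproj 𝒞 1 η') : η - η' ∈ 𝒞 (k, 0) := by
  have hdiff : η - η' = bcomp 𝒞 k 0 η - bcomp 𝒞 k 0 η' :=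
    calc η - η' = (bproj 𝒞 1 η + bcomp 𝒞 k 0 η) - (bproj 𝒞 1 η' + bcomp 𝒞 k 0 η') := by
          rw [bproj_add_bcomp_of_mem_bdeg hlow hη, bproj_add_bcomp_of_mem_bdeg hlow hη']
      _ = bcomp 𝒞 k 0 η - bcomp 𝒞 k 0 η' := by rw [h]; abel
  rw [hdiff]
  exact sub_mem (bcomp_mem 𝒞 k 0 η) (bcomp_mem 𝒞 k 0 η')

variable {D21 D10 D01 : M →ₗ[R] M}
  (h21 : ∀ p q : ℤ, (𝒞 (p, q)).map D21 ≤ 𝒞 (p + 2, q - 1))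
  (h10 : ∀ p q : ℤ, (𝒞 (p, q)).map D10 ≤ 𝒞 (p + 1, q))
  (h01 : ∀ p q : ℤ, (𝒞 (p, q)).map D01 ≤ 𝒞 (p, q + 1))
include h21 h10 h01

lemma apply_eq_bproj_add_rowZero (hlow : ∀ p q : ℤ, q < 0 → 𝒞 (p, q) = ⊥)
    {k : ℤ} {η : M} (hη : η ∈ bdeg 𝒞 k) :
    (D21 + D10 + D01) η = bproj 𝒞 1 ((D21 + D10 + D01) η) +
      (D21 (bcomp 𝒞 (k - 1) 1 η) + D10 (bcomp 𝒞 k 0 η)) := by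
  refine eqOn_bdeg 𝒞 (g := bproj 𝒞 1 ∘ₗ (D21 + D10 + D01) +
      (D21 ∘ₗ bcompLinearMap 𝒞 (k - 1) 1 + D10 ∘ₗ bcompLinearMap 𝒞 k 0))
    (fun p x hx => ?_) hη
  have hD21 := h21 p (k - p) ⟨x, hx, rfl⟩
  have hD10 := h10 p (k - p) ⟨x, hx, rfl⟩
  have hD01 := h01 p (k - p) ⟨x, hx, rfl⟩
  simp only [LinearMap.add_apply, LinearMap.comp_apply, bcompLinearMap_apply, map_add,
    bproj_of_mem 𝒞 1 hD21, bproj_of_mem 𝒞 1 hD10, bproj_of_mem 𝒞 1 hD01,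
    bcomp_of_mem 𝒞 (k - 1) 1 hx, bcomp_of_mem 𝒞 k 0 hx, Prod.ext_iff]
  rcases lt_trichotomy (k - p) 0 with hneg | hzero | hpos
  · simp [eq_zero_of_mem_of_snd_neg hlow hneg hx]
  · rw [eq_zero_of_mem_of_snd_neg hlow (by omega) hD21]
    rw [if_neg (by omega), if_neg (by omega), if_pos (by omega), if_neg (by omega),
      if_pos (by omega)]
    simp only [map_zero]
    abel
  rcases eq_or_lt_of_le (Int.add_one_le_of_lt hpos) with hone | htwo
  · rw [if_neg (by omega), if_pos (by omega), if_pos (by omega), if_pos (by omega),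
      if_neg (by omega)]
    simp only [map_zero]
    abel
  · rw [if_pos (by omega), if_pos (by omega), if_pos (by omega), if_neg (by omega),
      if_neg (by omega)]
    simp only [map_zero, add_zero]

lemma apply_mem_map_D10_of_mem_rowZero (hlow : ∀ p q : ℤ, q < 0 → 𝒞 (p, q) = ⊥)
    {k : ℤ} {μ : M} (hμ : μ ∈ 𝒞 (k, 0)) (hπ : bproj 𝒞 1 ((D21 + D10 + D01) μ) = 0) :
    (D21 + D10 + D01) μ ∈
      Submodule.map D10 ((LinearMap.ker D01 ⊓ LinearMap.ker D21) ⊓ 𝒞 (k, 0)) := by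
  have hD21 : D21 μ = 0 := eq_zero_of_mem_of_snd_neg hlow (by omega) (h21 k 0 ⟨μ, hμ, rfl⟩)
  have hD01 : D01 μ = 0 := by
    simpa only [LinearMap.add_apply, map_add, hD21, map_zero, zero_add,
      bproj_of_mem 𝒞 1 (h10 k 0 ⟨μ, hμ, rfl⟩), bproj_of_mem 𝒞 1 (h01 k 0 ⟨μ, hμ, rfl⟩),
      if_neg (show ¬(1 : ℤ) ≤ 0 by omega), le_refl, if_true] using hπ
  exact ⟨μ, ⟨⟨hD01, hD21⟩, hμ⟩, by simp [hD21, hD01]⟩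

end NonnegRows

theorem statement11_general
    (𝒞 : ℤ × ℤ → Submodule R M) [DirectSum.Decomposition 𝒞]
    (hfq : ∀ p q : ℤ, p < 0 ∨ q < 0 → 𝒞 (p, q) = ⊥)
    (D21 D10 D01 : M →ₗ[R] M)
    (h21 : ∀ p q : ℤ, (𝒞 (p, q)).map D21 ≤ 𝒞 (p + 2, q - 1))
    (h10 : ∀ p q : ℤ, (𝒞 (p, q)).map D10 ≤ 𝒞 (p + 1, q))
    (h01 : ∀ p q : ℤ, (𝒞 (p, q)).map D01 ≤ 𝒞 (p, q + 1))
    (D : M →ₗ[R] M) (hDdef : D = D21 + D10 + D01)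
    (k : ℤ)
    -- `BN` : the (k+1)-coboundaries of the null subcomplex `N₀`
    (BN : Submodule R M)
    (hBN : BN = Submodule.map D10
      ((LinearMap.ker D01 ⊓ LinearMap.ker D21) ⊓ 𝒞 (k, 0))) :
    -- `ρ_k` is well defined: the class is independent of the choice of lift
    (∀ η η' : M, η ∈ bdeg 𝒞 k → η' ∈ bdeg 𝒞 k →
      bproj 𝒞 1 η = bproj 𝒞 1 η' →
      bproj 𝒞 1 (D η) = 0 → bproj 𝒞 1 (D η') = 0 →
      (D21 (bcomp 𝒞 (k - 1) 1 η) + D10 (bcomp 𝒞 k 0 η)) -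
        (D21 (bcomp 𝒞 (k - 1) 1 η') + D10 (bcomp 𝒞 k 0 η')) ∈ BN) ∧
    -- `ker ρ_k = Z^k_1 = π_1(Z^k(C,D))`
    {ξ : M | ∃ η, η ∈ bdeg 𝒞 k ∧ bproj 𝒞 1 η = ξ ∧ bproj 𝒞 1 (D η) = 0 ∧
        D21 (bcomp 𝒞 (k - 1) 1 η) + D10 (bcomp 𝒞 k 0 η) ∈ BN} =
      (Submodule.map (bproj 𝒞 1) (bdeg 𝒞 k ⊓ LinearMap.ker D) : Set M) := by
  subst hDdef hBN
  have hlow (p q : ℤ) (hq : q < 0) : 𝒞 (p, q) = ⊥ := hfq p q (Or.inr hq)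
  have rowZero_eq {η : M} (hη : η ∈ bdeg 𝒞 k) (hπ : bproj 𝒞 1 ((D21 + D10 + D01) η) = 0) :
      D21 (bcomp 𝒞 (k - 1) 1 η) + D10 (bcomp 𝒞 k 0 η) = (D21 + D10 + D01) η := by
    rw [apply_eq_bproj_add_rowZero h21 h10 h01 hlow hη, hπ, zero_add]
  refine ⟨fun η η' hη hη' hξ hπ hπ' => ?_, ?_⟩
  · rw [rowZero_eq hη hπ, rowZero_eq hη' hπ', ← map_sub]
    exact apply_mem_map_D10_of_mem_rowZero h21 h10 h01 hlow (sub_mem_of_bproj_eq hlow hη hη' hξ)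
      (by rw [map_sub, map_sub, hπ, hπ', sub_zero])
  ext ξ
  simp only [Set.mem_ofPred_eq, SetLike.mem_coe, Submodule.mem_map, Submodule.mem_inf,
    LinearMap.mem_ker]
  constructor
  · rintro ⟨η, hη, rfl, hπ, γ, ⟨⟨hγ01, hγ21⟩, hγ⟩, hγη⟩
    have hγdeg : γ ∈ bdeg 𝒞 k := le_bdeg 𝒞 k k (by rwa [sub_self])
    refine ⟨η - γ, ⟨sub_mem hη hγdeg, ?_⟩, ?_⟩
    · rw [map_sub, ← rowZero_eq hη hπ, ← hγη]
      simp [hγ01, hγ21]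
    · rw [map_sub, bproj_of_mem 𝒞 1 hγ, if_neg (by omega), sub_zero]
  · rintro ⟨ζ, ⟨hζ, hDζ⟩, rfl⟩
    refine ⟨ζ, hζ, rfl, by rw [hDζ, map_zero], ?_⟩
    rw [rowZero_eq hζ (by rw [hDζ, map_zero]), hDζ]
    exact ⟨0, ⟨⟨map_zero _, map_zero _⟩, zero_mem _⟩, map_zero _⟩

theorem statement11
    (𝒞 : ℤ × ℤ → Submodule R M) [DirectSum.Decomposition 𝒞]
    (hfq : ∀ p q : ℤ, p < 0 ∨ q < 0 → 𝒞 (p, q) = ⊥)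
    (D21 D10 D01 : M →ₗ[R] M)
    (h21 : ∀ p q : ℤ, (𝒞 (p, q)).map D21 ≤ 𝒞 (p + 2, q - 1))
    (h10 : ∀ p q : ℤ, (𝒞 (p, q)).map D10 ≤ 𝒞 (p + 1, q))
    (h01 : ∀ p q : ℤ, (𝒞 (p, q)).map D01 ≤ 𝒞 (p, q + 1))
    (D : M →ₗ[R] M) (hDdef : D = D21 + D10 + D01) (hD : D ∘ₗ D = 0)
    (k : ℤ)
    -- `BN` : the (k+1)-coboundaries of the null subcomplex `N₀`
    (BN : Submodule R M)
    (hBN : BN = Submodule.map D10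
      ((LinearMap.ker D01 ⊓ LinearMap.ker D21) ⊓ 𝒞 (k, 0))) :
    -- `ρ_k` is well defined: the class is independent of the choice of lift
    (∀ η η' : M, η ∈ bdeg 𝒞 k → η' ∈ bdeg 𝒞 k →
      bproj 𝒞 1 η = bproj 𝒞 1 η' →
      bproj 𝒞 1 (D η) = 0 → bproj 𝒞 1 (D η') = 0 →
      (D21 (bcomp 𝒞 (k - 1) 1 η) + D10 (bcomp 𝒞 k 0 η)) -
        (D21 (bcomp 𝒞 (k - 1) 1 η') + D10 (bcomp 𝒞 k 0 η')) ∈ BN) ∧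
    -- `ker ρ_k = Z^k_1 = π_1(Z^k(C,D))`
    {ξ : M | ∃ η, η ∈ bdeg 𝒞 k ∧ bproj 𝒞 1 η = ξ ∧ bproj 𝒞 1 (D η) = 0 ∧
        D21 (bcomp 𝒞 (k - 1) 1 η) + D10 (bcomp 𝒞 k 0 η) ∈ BN} =
      (Submodule.map (bproj 𝒞 1) (bdeg 𝒞 k ⊓ LinearMap.ker D) : Set M) :=
  statement11_general 𝒞 hfq D21 D10 D01 h21 h10 h01 D hDdef k BN hBN
end

section
/- Let P = ‖y‖² ∂/∂y₁ ∧ ∂/∂y₂ be the Poisson bivector on R², let Z₁ = y₁∂/∂y₁ + y₂∂/∂y₂ (Euler vector field) and Z₂ = −y₂∂/∂y₁ + y₁∂/∂y₂. Then a vector field Y = Y₁∂/∂y₁ + Y₂∂/∂y₂ on R² satisfies L_Y P = 0 if and only if y₁Y₁ + y₂Y₂ = (1/2)‖y‖²(∂Y₁/∂y₁ + ∂Y₂/∂y₂). In particular, Z₁ and Z₂ are Poisson vector fields of P. -/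
/-- The divergence of a vector field on `ℝ²` (with respect to `dy₁ ∧ dy₂`). -/
noncomputable def divg (Y : ℝ × ℝ → ℝ × ℝ) (y : ℝ × ℝ) : ℝ :=
  (fderiv ℝ Y y (1, 0)).1 + (fderiv ℝ Y y (0, 1)).2

/-- The coefficient of the Lie derivative `L_Y (f ∂₁ ∧ ∂₂)` with respect to
`∂₁ ∧ ∂₂`, in coordinates: `L_Y (f ∂₁∧∂₂) = (Y·∇f − f · div Y) ∂₁∧∂₂`. -/
noncomputable def lieBiv (Y : ℝ × ℝ → ℝ × ℝ) (f : ℝ × ℝ → ℝ) (y : ℝ × ℝ) : ℝ :=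
  fderiv ℝ f y (Y y) - f y * divg Y y

lemma fderiv_norm_sq_R2 (y v : ℝ × ℝ) :
    fderiv ℝ (fun y : ℝ × ℝ => y.1 ^ 2 + y.2 ^ 2) y v = 2 * y.1 * v.1 + 2 * y.2 * v.2 := by
  have h1 : HasFDerivAt (fun y : ℝ × ℝ => y.1) (ContinuousLinearMap.fst ℝ ℝ ℝ) y :=
    hasFDerivAt_fst
  have h2 : HasFDerivAt (fun y : ℝ × ℝ => y.2) (ContinuousLinearMap.snd ℝ ℝ ℝ) y :=
    hasFDerivAt_snd
  have h : HasFDerivAt (fun y : ℝ × ℝ => y.1 ^ 2 + y.2 ^ 2)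
      (((y.1 • (ContinuousLinearMap.fst ℝ ℝ ℝ) + y.1 • (ContinuousLinearMap.fst ℝ ℝ ℝ))) +
        ((y.2 • (ContinuousLinearMap.snd ℝ ℝ ℝ) + y.2 • (ContinuousLinearMap.snd ℝ ℝ ℝ)))) y := by
    have := (h1.mul h1).add (h2.mul h2)
    rw [show (fun y : ℝ × ℝ => y.1 ^ 2 + y.2 ^ 2) = ((fun y : ℝ × ℝ => y.1) * fun y => y.1) + (fun y : ℝ × ℝ => y.2) * fun y => y.2 by funext z; simp [pow_two]]
    exact this
  rw [h.fderiv]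
  simp
  ring

theorem statement17 (Y : ℝ × ℝ → ℝ × ℝ) (hY : ContDiff ℝ (⊤ : ℕ∞) Y) :
    ((∀ y, lieBiv Y (fun y => y.1 ^ 2 + y.2 ^ 2) y = 0) ↔
      (∀ y : ℝ × ℝ, y.1 * (Y y).1 + y.2 * (Y y).2 =
        (1 / 2) * (y.1 ^ 2 + y.2 ^ 2) * divg Y y)) ∧
    (∀ y, lieBiv (fun y => y) (fun y => y.1 ^ 2 + y.2 ^ 2) y = 0) ∧
    (∀ y, lieBiv (fun y => (-y.2, y.1)) (fun y => y.1 ^ 2 + y.2 ^ 2) y = 0) := by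
  refine ⟨?_, ?_, ?_⟩
  · constructor
    · intro h y
      have := h y
      rw [lieBiv, fderiv_norm_sq_R2] at this
      linarith
    · intro h y
      rw [lieBiv, fderiv_norm_sq_R2]
      have := h y
      linarith
  · intro y
    rw [lieBiv, fderiv_norm_sq_R2]
    have hd : divg (fun y : ℝ × ℝ => y) y = 2 := by
      rw [divg, fderiv_id']
      norm_num
    rw [hd]
    ring
  · intro y
    rw [lieBiv, fderiv_norm_sq_R2]
    have h : HasFDerivAt (fun y : ℝ × ℝ => ((-y.2, y.1) : ℝ × ℝ))
        ((-(ContinuousLinearMap.snd ℝ ℝ ℝ)).prod (ContinuousLinearMap.fst ℝ ℝ ℝ)) y := by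
      exact ((hasFDerivAt_snd (p := y)).neg).prodMk hasFDerivAt_fst
    have hd : divg (fun y : ℝ × ℝ => ((-y.2, y.1) : ℝ × ℝ)) y = 0 := by
      rw [divg, h.fderiv]
      simp
    rw [hd]
    ring
end
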